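/- arXiv:1708.08344 — 2 statements merged into one kernel-verified Lean document; each statement's English description precedes it below -/
import Mathlib

section
/- Let α > 0 and let f : (0,∞) → (0,∞) be nonincreasing and regularly varying at 0 with index -α, with f(x) → ∞ as x ↓ 0. Then for every u > 0 and y > 0, t·f(u·f^←(y/t)) → u^{-α}·y as t ↓ 0. -/
open MeasureTheory Filter Topology

/-- Generalized inverse of a nonincreasing function `f : (0,∞) → (0,∞)`:
`f^←(y) = inf {x > 0 : f x ≤ y}`. -/
noncomputable def geninv (f : ℝ → ℝ) (y : ℝ) : ℝ := sInf {x : ℝ | 0 < x ∧ f x ≤ y}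

/-!
Write `g = f^←`. By monotonicity, `f (l * g s) ≤ s ≤ f (l⁻¹ * g s)` for every `l > 1`, and
`g s → 0⁺` as `s → ∞`; regular variation turns this squeeze into `f (g s) / s → 1`, the bounds
`l ^ (∓α)` being as close to `1` as we like. Hence
`s⁻¹ * f (u * g s) = f (u * g s) / f (g s) * (f (g s) / s) → u ^ (-α)`, and `s = y / t` gives the claim.
-/

section GenInv

variable {f : ℝ → ℝ} {s x : ℝ}

lemma geninv_le (hx : 0 < x) (hfx : f x ≤ s) : geninv f s ≤ x :=
  csInf_le ⟨0, fun _ hz => hz.1.le⟩ ⟨hx, hfx⟩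

lemma lt_apply_of_lt_geninv (hx : 0 < x) (hxs : x < geninv f s) : s < f x :=
  lt_of_not_ge fun h => (geninv_le hx h).not_gt hxs

lemma apply_le_of_geninv_lt (hmono : AntitoneOn f (Set.Ioi 0))
    (hne : {x | 0 < x ∧ f x ≤ s}.Nonempty) (hxs : geninv f s < x) : f x ≤ s := by
  obtain ⟨z, ⟨hz, hzs⟩, hzx⟩ := (csInf_lt_iff ⟨0, fun _ hz => hz.1.le⟩ hne).1 hxs
  exact (hmono hz (hz.trans hzx) hzx.le).trans hzs

lemma geninv_pos (hinf : Tendsto f (𝓝[>] 0) atTop) (hne : {x | 0 < x ∧ f x ≤ s}.Nonempty) :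
    0 < geninv f s := by
  obtain ⟨δ, hδ, hbig⟩ :=
    mem_nhdsGT_iff_exists_Ioo_subset.1 (hinf.eventually (eventually_gt_atTop s))
  refine hδ.trans_le (le_csInf hne fun x ⟨hx, hfx⟩ => ?_)
  by_contra! hxδ
  exact (hbig ⟨hx, hxδ⟩ : s < f x).not_ge hfx

lemma tendsto_geninv_atTop (hinf : Tendsto f (𝓝[>] 0) atTop) :
    Tendsto (geninv f) atTop (𝓝[>] 0) := by
  have hpos : ∀ᶠ s in atTop, 0 < geninv f s :=
    (eventually_ge_atTop (f 1)).mono fun s hs => geninv_pos hinf ⟨1, one_pos, hs⟩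
  refine tendsto_nhdsWithin_iff.2
    ⟨tendsto_order.2 ⟨fun a ha => hpos.mono fun s hs => ha.trans hs, fun b hb => ?_⟩, hpos⟩
  filter_upwards [eventually_ge_atTop (f (b / 2))] with s hs
  exact (geninv_le (half_pos hb) hs).trans_lt (half_lt_self hb)

end GenInv

lemma exists_one_lt_rpow_mem (a : ℝ) {U : Set ℝ} (hU : U ∈ 𝓝 1) : ∃ l, 1 < l ∧ l ^ a ∈ U := by
  have hcont : Tendsto (fun l : ℝ => l ^ a) (𝓝[>] 1) (𝓝 1) := by
    simpa using (Real.continuousAt_rpow_const 1 a (Or.inl one_ne_zero)).tendsto.mono_left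
      nhdsWithin_le_nhds
  obtain ⟨l, hlU, hl⟩ := ((hcont.eventually hU).and self_mem_nhdsWithin).exists
  exact ⟨l, hl, hlU⟩

lemma Filter.Tendsto.const_mul_nhdsGT_zero {β : Type*} {L : Filter β} {x : β → ℝ}
    (hx : Tendsto x L (𝓝[>] 0)) {k : ℝ} (hk : 0 < k) :
    Tendsto (fun b => k * x b) L (𝓝[>] 0) := by
  refine tendsto_nhdsWithin_iff.2 ⟨?_, ?_⟩
  · simpa using (tendsto_nhdsWithin_iff.1 hx).1.const_mul k
  · exact (tendsto_nhdsWithin_iff.1 hx).2.mono fun b hb => mul_pos hk hb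

theorem tendsto_apply_div_of_squeeze {β : Type*} {L : Filter β} {α : ℝ} {f : ℝ → ℝ}
    (hpos : ∀ x, 0 < x → 0 < f x)
    (hrv : ∀ l, 0 < l → Tendsto (fun x => f (l * x) / f x) (𝓝[>] 0) (𝓝 (l ^ (-α))))
    {x v : β → ℝ} (hx : Tendsto x L (𝓝[>] 0))
    (hv : ∀ l, 1 < l → ∀ᶠ b in L, f (l * x b) ≤ v b ∧ v b ≤ f (l⁻¹ * x b)) :
    Tendsto (fun b => f (x b) / v b) L (𝓝 1) := by
  have hx0 : ∀ᶠ b in L, 0 < x b := (tendsto_nhdsWithin_iff.1 hx).2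
  refine tendsto_order.2 ⟨fun c hc => ?_, fun c hc => ?_⟩
  · obtain ⟨l, hl, hcl⟩ := exists_one_lt_rpow_mem (-α) (Ioi_mem_nhds hc)
    have hlim : Tendsto (fun b => f (x b) / f (l⁻¹ * x b)) L (𝓝 (l ^ (-α))) := by
      refine ((hrv l (by linarith)).comp (hx.const_mul_nhdsGT_zero (inv_pos.2 (by linarith)))).congr
        fun b => ?_
      simp [mul_inv_cancel_left₀ (by linarith : l ≠ 0)]
    filter_upwards [hlim.eventually (lt_mem_nhds hcl), hv l hl, hx0] with b hb hvb hxb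
    calc c < f (x b) / f (l⁻¹ * x b) := hb
      _ ≤ f (x b) / v b := div_le_div_of_nonneg_left (hpos _ hxb).le
            ((hpos _ (mul_pos (by linarith) hxb)).trans_le hvb.1) hvb.2
  · obtain ⟨l, hl, hcl⟩ := exists_one_lt_rpow_mem α (Iio_mem_nhds hc)
    have hlim : Tendsto (fun b => f (x b) / f (l * x b)) L (𝓝 (l ^ α)) := by
      have := ((hrv l (by linarith)).comp hx).inv₀ (Real.rpow_pos_of_pos (by linarith) _).ne'
      simpa [Real.rpow_neg (by linarith : (0 : ℝ) ≤ l)] using this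
    filter_upwards [hlim.eventually (gt_mem_nhds hcl), hv l hl, hx0] with b hb hvb hxb
    calc f (x b) / v b ≤ f (x b) / f (l * x b) :=
          div_le_div_of_nonneg_left (hpos _ hxb).le (hpos _ (mul_pos (by linarith) hxb)) hvb.1
      _ < c := hb

theorem tendsto_inv_mul_apply_mul_geninv {α : ℝ} {f : ℝ → ℝ}
    (hpos : ∀ x, 0 < x → 0 < f x) (hmono : AntitoneOn f (Set.Ioi 0))
    (hrv : ∀ l, 0 < l → Tendsto (fun x => f (l * x) / f x) (𝓝[>] 0) (𝓝 (l ^ (-α))))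
    (hinf : Tendsto f (𝓝[>] 0) atTop) {u : ℝ} (hu : 0 < u) :
    Tendsto (fun s => s⁻¹ * f (u * geninv f s)) atTop (𝓝 (u ^ (-α))) := by
  have hg := tendsto_geninv_atTop hinf
  have hsq : Tendsto (fun s => f (geninv f s) / s) atTop (𝓝 1) := by
    refine tendsto_apply_div_of_squeeze hpos hrv hg fun l hl => ?_
    filter_upwards [eventually_ge_atTop (f 1)] with s hs
    have hne : {x | 0 < x ∧ f x ≤ s}.Nonempty := ⟨1, one_pos, hs⟩
    have hg0 := geninv_pos hinf hne
    exact ⟨apply_le_of_geninv_lt hmono hne (lt_mul_of_one_lt_left hg0 hl),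
      (lt_apply_of_lt_geninv (by positivity)
        (mul_lt_of_lt_one_left hg0 (inv_lt_one_of_one_lt₀ hl))).le⟩
  have hprod := ((hrv u hu).comp hg).mul hsq
  rw [mul_one] at hprod
  refine hprod.congr' ?_
  filter_upwards [(tendsto_nhdsWithin_iff.1 hg).2] with s (hs : 0 < geninv f s)
  simp only [Function.comp_apply]
  rw [div_mul_div_cancel₀ (hpos _ hs).ne', div_eq_inv_mul]

theorem stmt0_general (α : ℝ) (f : ℝ → ℝ)
    (hpos : ∀ x : ℝ, 0 < x → 0 < f x)
    (hmono : AntitoneOn f (Set.Ioi (0 : ℝ)))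
    (hrv : ∀ l : ℝ, 0 < l →
      Tendsto (fun x : ℝ => f (l * x) / f x) (nhdsWithin 0 (Set.Ioi 0)) (nhds (l ^ (-α))))
    (hinf : Tendsto f (nhdsWithin 0 (Set.Ioi 0)) atTop)
    (u y : ℝ) (hu : 0 < u) (hy : 0 < y) :
    Tendsto (fun t : ℝ => t * f (u * geninv f (y / t)))
      (nhdsWithin 0 (Set.Ioi 0)) (nhds (u ^ (-α) * y)) := by
  have hs : Tendsto (fun t : ℝ => y / t) (𝓝[>] 0) atTop := by
    simpa [div_eq_mul_inv] using tendsto_inv_nhdsGT_zero.const_mul_atTop hy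
  have hlim := ((tendsto_inv_mul_apply_mul_geninv hpos hmono hrv hinf hu).comp hs).mul_const y
  refine hlim.congr' ?_
  filter_upwards [self_mem_nhdsWithin] with t (ht : 0 < t)
  simp only [Function.comp_apply]
  field_simp

/-- if `f : (0,∞) → (0,∞)` is nonincreasing, regularly varying at 0 with
index `-α` (`α > 0`) and `f(x) → ∞` as `x ↓ 0`, then for all `u, y > 0`,
`t · f(u · f^←(y/t)) → u^{-α} · y` as `t ↓ 0`. -/
theorem stmt0 (α : ℝ) (hα : 0 < α) (f : ℝ → ℝ)
    (hpos : ∀ x : ℝ, 0 < x → 0 < f x)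
    (hmono : AntitoneOn f (Set.Ioi (0 : ℝ)))
    (hrv : ∀ l : ℝ, 0 < l →
      Tendsto (fun x : ℝ => f (l * x) / f x) (nhdsWithin 0 (Set.Ioi 0)) (nhds (l ^ (-α))))
    (hinf : Tendsto f (nhdsWithin 0 (Set.Ioi 0)) atTop)
    (u y : ℝ) (hu : 0 < u) (hy : 0 < y) :
    Tendsto (fun t : ℝ => t * f (u * geninv f (y / t)))
      (nhdsWithin 0 (Set.Ioi 0)) (nhds (u ^ (-α) * y)) :=
  stmt0_general α f hpos hmono hrv hinf u y hu hy
end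

section
/- Let α > 0 and let f : (0,∞) → (0,∞) be nonincreasing and regularly varying at 0 with index -α. Then (f(x−) − f(x))/f(x) → 0 as x ↓ 0, where f(x−) denotes the left limit of f at x. -/
/-! For `0 < l < 1`, monotonicity squeezes the left limit: `f x ≤ f (x−) ≤ f (l x)`. Hence the
relative jump at `x` is at most `f (l x) / f x - 1 → l ^ (-α) - 1`, which is as small as we like
once `l` is close to `1`. -/

open Filter Topology Set Function

section LeftLim

variable {α β : Type*} [LinearOrder α] [TopologicalSpace α] [OrderTopology α] [DenselyOrdered α]
  [ConditionallyCompleteLinearOrder β] [TopologicalSpace β] [OrderTopology β]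
  {f : α → β} {a x y : α}

theorem AntitoneOn.tendsto_leftLim_of_Ioi (hf : AntitoneOn f (Ioi a)) (hx : a < x) :
    Tendsto f (𝓝[<] x) (𝓝 (leftLim f x)) := by
  have hne : (Ioo a x).Nonempty := nonempty_Ioo.2 hx
  have hfIoo : AntitoneOn f (Ioo a x) := hf.mono Ioo_subset_Ioi_self
  have hbdd : BddBelow (f '' Ioo a x) := ⟨f x, by
    rintro _ ⟨z, hz, rfl⟩
    exact hf hz.1 hx hz.2.le⟩
  have hlim := hfIoo.tendsto_nhdsWithin_Ioo_left hne hbdd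
  have : (𝓝[<] x).NeBot := nhdsLT_neBot_of_exists_lt ⟨a, hx⟩
  rwa [leftLim_eq_of_tendsto hlim]

theorem AntitoneOn.le_leftLim_of_Ioi (hf : AntitoneOn f (Ioi a)) (hx : a < x) :
    f x ≤ leftLim f x := by
  have : (𝓝[<] x).NeBot := nhdsLT_neBot_of_exists_lt ⟨a, hx⟩
  refine ge_of_tendsto (hf.tendsto_leftLim_of_Ioi hx) ?_
  filter_upwards [Ioo_mem_nhdsLT hx] with z hz using hf hz.1 hx hz.2.le

theorem AntitoneOn.leftLim_le_of_Ioi (hf : AntitoneOn f (Ioi a)) (hy : a < y) (hyx : y < x) :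
    leftLim f x ≤ f y := by
  have : (𝓝[<] x).NeBot := nhdsLT_neBot_of_exists_lt ⟨a, hy.trans hyx⟩
  refine le_of_tendsto (hf.tendsto_leftLim_of_Ioi (hy.trans hyx)) ?_
  filter_upwards [Ioo_mem_nhdsLT hyx] with z hz using hf hy (hy.trans hz.1) hz.1.le

end LeftLim

theorem exists_mem_Ioo_rpow_lt (β : ℝ) {c : ℝ} (hc : 1 < c) :
    ∃ l ∈ Ioo (0 : ℝ) 1, l ^ β < c := by
  have hcont : Tendsto (fun l : ℝ => l ^ β) (𝓝[<] 1) (𝓝 1) := by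
    simpa using (Real.continuousAt_rpow_const 1 β (Or.inl one_ne_zero)).tendsto.mono_left
      nhdsWithin_le_nhds
  exact (Eventually.and (Ioo_mem_nhdsLT one_pos) (hcont.eventually (gt_mem_nhds hc))).exists

theorem stmt1_general (α : ℝ) (f : ℝ → ℝ)
    (hpos : ∀ x : ℝ, 0 < x → 0 < f x)
    (hmono : AntitoneOn f (Set.Ioi (0 : ℝ)))
    (hrv : ∀ l : ℝ, 0 < l →
      Tendsto (fun x : ℝ => f (l * x) / f x) (nhdsWithin 0 (Set.Ioi 0)) (nhds (l ^ (-α)))) :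
    Tendsto (fun x : ℝ => (Function.leftLim f x - f x) / f x)
      (nhdsWithin 0 (Set.Ioi 0)) (nhds 0) := by
  refine tendsto_order.2 ⟨fun a ha => ?_, fun ε hε => ?_⟩
  · filter_upwards [self_mem_nhdsWithin] with x hx
    exact ha.trans_le <| div_nonneg (sub_nonneg.2 (hmono.le_leftLim_of_Ioi hx)) (hpos x hx).le
  · obtain ⟨l, ⟨hl0, hl1⟩, hlε⟩ := exists_mem_Ioo_rpow_lt (-α) (lt_add_of_pos_right 1 hε)
    filter_upwards [(hrv l hl0).eventually (gt_mem_nhds hlε), self_mem_nhdsWithin]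
      with x hratio hx
    have hjump : leftLim f x ≤ f (l * x) :=
      hmono.leftLim_le_of_Ioi (mul_pos hl0 hx) (mul_lt_of_lt_one_left hx hl1)
    have hfx := hpos x hx
    rw [div_lt_iff₀ hfx] at hratio ⊢
    linarith

/-- if `f : (0,∞) → (0,∞)` is nonincreasing and regularly varying at 0 with
index `-α` (`α > 0`), then `(f(x−) − f(x))/f(x) → 0` as `x ↓ 0`, where `f(x−)` is the
left limit of `f` at `x`. -/
theorem stmt1 (α : ℝ) (hα : 0 < α) (f : ℝ → ℝ)
    (hpos : ∀ x : ℝ, 0 < x → 0 < f x)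
    (hmono : AntitoneOn f (Set.Ioi (0 : ℝ)))
    (hrv : ∀ l : ℝ, 0 < l →
      Tendsto (fun x : ℝ => f (l * x) / f x) (nhdsWithin 0 (Set.Ioi 0)) (nhds (l ^ (-α)))) :
    Tendsto (fun x : ℝ => (Function.leftLim f x - f x) / f x)
      (nhdsWithin 0 (Set.Ioi 0)) (nhds 0) :=
  stmt1_general α f hpos hmono hrv
end
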